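/- arXiv:2401.03263 — 3 statements merged into one kernel-verified Lean document; each statement's English description precedes it below -/
import Mathlib

section
/- Let Δ ≥ 1 and α ≥ 1 be reals, let E ≥ 0 and opt > 0 be reals with opt ≥ E/Δ. If alg + E ≤ ((Δ + α)/(Δ + 1))·(opt + E) for a real alg ≥ 0, then alg ≤ α·opt. -/
theorem stmt_5 (Δ α E opt alg : ℝ) (hΔ : 1 ≤ Δ) (hα : 1 ≤ α) (hE : 0 ≤ E)
    (hopt : 0 < opt) (hEopt : E / Δ ≤ opt) (halg : 0 ≤ alg)
    (h : alg + E ≤ ((Δ + α) / (Δ + 1)) * (opt + E)) :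
    alg ≤ α * opt := by
  have hΔ0 : (0:ℝ) < Δ := lt_of_lt_of_le one_pos hΔ
  have hE' : E ≤ Δ * opt := by
    rw [div_le_iff₀ hΔ0] at hEopt; linarith [hEopt]
  have h1 : (0:ℝ) < Δ + 1 := by linarith
  rw [div_mul_eq_mul_div, le_div_iff₀ h1] at h
  nlinarith [mul_nonneg (sub_nonneg.mpr hα) (sub_nonneg.mpr hE')]
end

section
/- For reals n > 0 and p, t ≥ 0 with t ≤ p and p - t ≤ n, it holds that 1 + min{2(p-t), 2n - (p-t)}/(n + (p-t)) ≤ 9/5. -/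
theorem stmt_11 (n p t : ℝ) (hn : 0 < n) (ht : 0 ≤ t) (htp : t ≤ p) (hpn : p - t ≤ n) :
    1 + (min (2 * (p - t)) (2 * n - (p - t))) / (n + (p - t)) ≤ 9/5 := by
  have hpos : 0 < n + (p - t) := by linarith
  have key : (min (2 * (p - t)) (2 * n - (p - t))) / (n + (p - t)) ≤ 4/5 := by
    rw [div_le_iff₀ hpos]
    rcases le_total (2 * (p - t)) (2 * n - (p - t)) with h | h
    · rw [min_eq_left h]; nlinarith
    · rw [min_eq_right h]; nlinarith
  linarith
end

section
/- Let G = (V,E) be a finite graph whose vertices are trees (3-element sets) and whose edges join trees sharing exactly 2 elements. For the induced BSTSO instance on vertex set V (each tree has 3 variables, every 2-element subset of variables occurs in at most two trees), the minimum circuit size equals 2|V| - ν(G), where ν(G) is the maximum matching number of G. Abstractly: if every pair of variables is contained in at most 2 trees of a family T of 3-element sets, then min circuit size = 2|T| - ν, where ν is the maximum number of pairwise disjoint unordered pairs {T, T'} of trees with |T ∩ T'| = 2. -/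
open Finset

lemma st14_count (𝒯 : Finset (Finset ℕ))
    (hocc : ∀ p : Finset ℕ, p.card = 2 → (𝒯.filter (fun t => p ⊆ t)).card ≤ 2)
    (f : Finset ℕ → Finset ℕ) (hf : ∀ t ∈ 𝒯, f t ⊆ t ∧ (f t).card = 2) :
    𝒯.card = (𝒯.image f).card +
      ((𝒯.image f).filter (fun p => 2 ≤ (𝒯.filter (fun t => f t = p)).card)).card := by
  classical
  have hfib : 𝒯.card = ∑ p ∈ 𝒯.image f, (𝒯.filter (fun t => f t = p)).card :=
    card_eq_sum_card_fiberwise (fun t ht => mem_image_of_mem f ht)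
  have hpt : ∀ p ∈ 𝒯.image f, (𝒯.filter (fun t => f t = p)).card =
      (if 2 ≤ (𝒯.filter (fun t => f t = p)).card then 2 else 1) := by
    intro p hp
    obtain ⟨t0, ht0, hft0⟩ := mem_image.1 hp
    have hle : (𝒯.filter (fun t => f t = p)).card ≤ 2 := by
      have hsub : (𝒯.filter (fun t => f t = p)) ⊆ (𝒯.filter (fun t => p ⊆ t)) := by
        intro s hs
        rw [mem_filter] at hs ⊢
        exact ⟨hs.1, hs.2 ▸ (hf s hs.1).1⟩
      calc _ ≤ (𝒯.filter (fun t => p ⊆ t)).card := card_le_card hsub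
        _ ≤ 2 := hocc p (hft0 ▸ (hf t0 ht0).2)
    have hge : 1 ≤ (𝒯.filter (fun t => f t = p)).card := by
      rw [Nat.one_le_iff_ne_zero, ← Nat.pos_iff_ne_zero, card_pos]
      exact ⟨t0, mem_filter.2 ⟨ht0, hft0⟩⟩
    split <;> omega
  rw [hfib, Finset.sum_congr rfl hpt, Finset.sum_ite, Finset.sum_const, Finset.sum_const,
    smul_eq_mul, smul_eq_mul]
  have := Finset.card_filter_add_card_filter_not
    (s := 𝒯.image f) (p := fun p => 2 ≤ (𝒯.filter (fun t => f t = p)).card)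
  simp only [not_le] at this ⊢
  omega

lemma st14_inter_two (𝒯 : Finset (Finset ℕ)) (h3 : ∀ t ∈ 𝒯, t.card = 3)
    {t t' p : Finset ℕ} (ht : t ∈ 𝒯) (ht' : t' ∈ 𝒯) (hne : t ≠ t') (hp2 : p.card = 2)
    (hpt : p ⊆ t) (hpt' : p ⊆ t') : (t ∩ t').card = 2 := by
  have hsub : p ⊆ t ∩ t' := subset_inter hpt hpt'
  have h2 : 2 ≤ (t ∩ t').card := hp2 ▸ card_le_card hsub
  rcases Nat.lt_or_ge (t ∩ t').card 3 with h | h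
  · omega
  · have he : t ∩ t' = t := eq_of_subset_of_card_le inter_subset_left
      (by rw [h3 t ht]; exact h)
    have hsub2 : t ⊆ t' := by rw [← he]; exact inter_subset_right
    exact absurd (eq_of_subset_of_card_le hsub2 (by rw [h3 t ht, h3 t' ht'])) hne

lemma st14_big_le (𝒯 : Finset (Finset ℕ)) (h3 : ∀ t ∈ 𝒯, t.card = 3)
    (hocc : ∀ p : Finset ℕ, p.card = 2 → (𝒯.filter (fun t => p ⊆ t)).card ≤ 2)
    (ν : ℕ)
    (hub : ∀ m ∈ {m : ℕ | ∃ M : Finset (Finset (Finset ℕ)), M.card = m ∧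
        (∀ e ∈ M, e.card = 2 ∧ e ⊆ 𝒯 ∧ ∃ t ∈ e, ∃ t' ∈ e, t ≠ t' ∧ (t ∩ t').card = 2) ∧
        (M : Set (Finset (Finset ℕ))).Pairwise Disjoint}, m ≤ ν)
    (f : Finset ℕ → Finset ℕ) (hf : ∀ t ∈ 𝒯, f t ⊆ t ∧ (f t).card = 2) :
    ((𝒯.image f).filter (fun p => 2 ≤ (𝒯.filter (fun t => f t = p)).card)).card ≤ ν := by
  classical
  set big := (𝒯.image f).filter (fun p => 2 ≤ (𝒯.filter (fun t => f t = p)).card) with hbig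
  set M := big.image (fun p => 𝒯.filter (fun t => f t = p)) with hMdef
  have hcard2 : ∀ p ∈ big, (𝒯.filter (fun t => f t = p)).card = 2 := by
    intro p hp
    rw [hbig, mem_filter] at hp
    obtain ⟨t0, ht0, hft0⟩ := mem_image.1 hp.1
    have hsub : (𝒯.filter (fun t => f t = p)) ⊆ (𝒯.filter (fun t => p ⊆ t)) := by
      intro s hs; rw [mem_filter] at hs ⊢
      exact ⟨hs.1, hs.2 ▸ (hf s hs.1).1⟩
    have := card_le_card hsub
    have := hocc p (hft0 ▸ (hf t0 ht0).2)
    omega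
  have hinj : Set.InjOn (fun p => 𝒯.filter (fun t => f t = p)) big := by
    intro p hp q hq hpq
    have h2 : 2 ≤ (𝒯.filter (fun t => f t = p)).card := (mem_filter.1 hp).2
    obtain ⟨t, ht⟩ := card_pos.1 (by omega : 0 < (𝒯.filter (fun t => f t = p)).card)
    have hpq' : 𝒯.filter (fun t => f t = p) = 𝒯.filter (fun t => f t = q) := hpq
    have htq : t ∈ 𝒯.filter (fun t => f t = q) := hpq' ▸ ht
    rw [mem_filter] at ht htq
    rw [← ht.2, htq.2]
  have hMcard : M.card = big.card := card_image_of_injOn hinj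
  refine hMcard ▸ hub M.card ⟨M, rfl, ?_, ?_⟩
  · intro e he
    obtain ⟨p, hp, rfl⟩ := mem_image.1 he
    have h2 := hcard2 p hp
    have hpimg : p ∈ 𝒯.image f := (mem_filter.1 hp).1
    obtain ⟨t0, ht0, hft0⟩ := mem_image.1 hpimg
    have hp2 : p.card = 2 := hft0 ▸ (hf t0 ht0).2
    refine ⟨h2, filter_subset _ _, ?_⟩
    obtain ⟨t, ht, t', ht', hne⟩ := one_lt_card.1 (by omega : 1 < (𝒯.filter (fun t => f t = p)).card)
    have h1 := mem_filter.1 ht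
    have h2' := mem_filter.1 ht'
    exact ⟨t, ht, t', ht', hne,
      st14_inter_two 𝒯 h3 h1.1 h2'.1 hne hp2 (h1.2 ▸ (hf t h1.1).1) (h2'.2 ▸ (hf t' h2'.1).1)⟩
  · intro e he e' he' hne
    obtain ⟨p, hp, rfl⟩ := mem_image.1 (by exact_mod_cast he)
    obtain ⟨q, hq, rfl⟩ := mem_image.1 (by exact_mod_cast he')
    have hpq : p ≠ q := fun h => hne (by rw [h])
    rw [disjoint_left]
    intro t ht htq
    rw [mem_filter] at ht htq
    exact hpq (by rw [← ht.2, htq.2])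

lemma st14_pair_eq {e : Finset (Finset ℕ)} (he : e.card = 2) {t t' : Finset ℕ}
    (ht : t ∈ e) (ht' : t' ∈ e) (hne : t ≠ t') : e = {t, t'} := by
  refine (eq_of_subset_of_card_le (insert_subset ht (singleton_subset_iff.2 ht')) ?_).symm
  rw [card_pair hne, he]

lemma st14_exists_f (𝒯 : Finset (Finset ℕ)) (h3 : ∀ t ∈ 𝒯, t.card = 3)
    (hocc : ∀ p : Finset ℕ, p.card = 2 → (𝒯.filter (fun t => p ⊆ t)).card ≤ 2)
    (M : Finset (Finset (Finset ℕ)))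
    (hM : ∀ e ∈ M, e.card = 2 ∧ e ⊆ 𝒯 ∧ ∃ t ∈ e, ∃ t' ∈ e, t ≠ t' ∧ (t ∩ t').card = 2)
    (hdisj : (M : Set (Finset (Finset ℕ))).Pairwise Disjoint) :
    ∃ f : Finset ℕ → Finset ℕ, (∀ t ∈ 𝒯, f t ⊆ t ∧ (f t).card = 2) ∧
      M.card ≤ ((𝒯.image f).filter (fun p => 2 ≤ (𝒯.filter (fun t => f t = p)).card)).card := by
  classical
  set P : Finset ℕ → Finset ℕ → Prop :=
    fun t t' => t' ≠ t ∧ ∃ e ∈ M, t ∈ e ∧ t' ∈ e with hP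
  set f : Finset ℕ → Finset ℕ := fun t =>
    if h : ∃ t', P t t' then t ∩ h.choose
    else t.erase (if ht : t.Nonempty then t.min' ht else 0) with hfdef
  -- partner uniqueness
  have huniq : ∀ t t1 t2, P t t1 → P t t2 → t1 = t2 := by
    intro t t1 t2 ⟨h1ne, e1, he1, hte1, ht1⟩ ⟨h2ne, e2, he2, hte2, ht2⟩
    have hee : e1 = e2 := by
      by_contra hne
      exact (disjoint_left.1 (hdisj he1 he2 hne)) hte1 hte2
    subst hee
    have := st14_pair_eq (hM e1 he1).1 hte1 ht1 (Ne.symm h1ne)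
    rw [this] at ht2
    rcases mem_insert.1 ht2 with h | h
    · exact absurd h h2ne
    · exact (mem_singleton.1 h).symm
  -- value on matched vertices
  have hval : ∀ e ∈ M, ∀ t ∈ e, ∀ t' ∈ e, t ≠ t' → f t = t ∩ t' := by
    intro e he t ht t' ht' hne
    have hex : ∃ s, P t s := ⟨t', Ne.symm hne, e, he, ht, ht'⟩
    rw [hfdef]
    simp only [dif_pos hex]
    rw [huniq t _ t' hex.choose_spec ⟨Ne.symm hne, e, he, ht, ht'⟩]
  -- edges have intersection card 2 for ANY two distinct elements
  have hicard : ∀ e ∈ M, ∀ t ∈ e, ∀ t' ∈ e, t ≠ t' → (t ∩ t').card = 2 := by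
    intro e he t ht t' ht' hne
    obtain ⟨a, ha, b, hb, hab, hiab⟩ := (hM e he).2.2
    have hee := st14_pair_eq (hM e he).1 ht ht' hne
    rw [hee, mem_insert, mem_singleton] at ha hb
    rcases ha with rfl | rfl <;> rcases hb with rfl | rfl
    · exact absurd rfl hab
    · exact hiab
    · rw [inter_comm]; exact hiab
    · exact absurd rfl hab
  have hf : ∀ t ∈ 𝒯, f t ⊆ t ∧ (f t).card = 2 := by
    intro t ht
    rw [hfdef]
    by_cases hex : ∃ s, P t s
    · simp only [dif_pos hex]
      obtain ⟨hne, e, he, hte, hse⟩ := hex.choose_spec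
      exact ⟨inter_subset_left, hicard e he t hte _ hse (Ne.symm hne)⟩
    · simp only [dif_neg hex]
      have hnonempty : t.Nonempty := by
        rw [← card_pos, h3 t ht]; omega
      simp only [dif_pos hnonempty]
      constructor
      · exact erase_subset _ _
      · rw [card_erase_of_mem (min'_mem t hnonempty), h3 t ht]
  refine ⟨f, hf, ?_⟩
  -- map each edge to the common intermediate value
  set φ : Finset (Finset ℕ) → Finset ℕ := fun e => e.sup f with hφdef
  have hφval : ∀ e ∈ M, ∀ a ∈ e, ∀ b ∈ e, a ≠ b → φ e = a ∩ b := by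
    intro e he a ha b hb hab
    have h1 := hval e he a ha b hb hab
    have h2 := hval e he b hb a ha (Ne.symm hab)
    rw [hφdef]
    simp only []
    rw [st14_pair_eq (hM e he).1 ha hb hab, sup_insert, sup_singleton, h1, h2,
      inter_comm b a, sup_eq_union, union_self]
  set big := (𝒯.image f).filter (fun p => 2 ≤ (𝒯.filter (fun t => f t = p)).card) with hbig
  have hmem : ∀ e ∈ M, φ e ∈ big := by
    intro e he
    obtain ⟨a, ha, b, hb, hab, hi⟩ := (hM e he).2.2
    have hφ := hφval e he a ha b hb hab
    have hfa : f a = φ e := (hval e he a ha b hb hab).trans hφ.symm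
    have hfb : f b = φ e := by
      rw [hval e he b hb a ha (Ne.symm hab), inter_comm, ← hφ]
    have ha𝒯 : a ∈ 𝒯 := (hM e he).2.1 ha
    have hb𝒯 : b ∈ 𝒯 := (hM e he).2.1 hb
    rw [hbig, mem_filter]
    constructor
    · exact mem_image.2 ⟨a, ha𝒯, hfa⟩
    · calc 2 = ({a, b} : Finset (Finset ℕ)).card := (card_pair hab).symm
        _ ≤ (𝒯.filter (fun t => f t = φ e)).card := by
            refine card_le_card ?_
            intro x hx
            rw [mem_insert, mem_singleton] at hx
            rcases hx with rfl | rfl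
            · exact mem_filter.2 ⟨ha𝒯, hfa⟩
            · exact mem_filter.2 ⟨hb𝒯, hfb⟩
  have hinj : Set.InjOn φ M := by
    intro e he e' he' heq
    by_contra hne
    obtain ⟨a, ha, b, hb, hab, hi⟩ := (hM e he).2.2
    obtain ⟨a', ha', b', hb', hab', hi'⟩ := (hM e' he').2.2
    have hdd := hdisj he he' hne
    have hφ := hφval e he a ha b hb hab
    have hφ' := hφval e' he' a' ha' b' hb' hab'
    have hpp : a ∩ b = a' ∩ b' := by rw [← hφ, ← hφ', heq]
    have haa' : a ≠ a' := fun h => disjoint_left.1 hdd ha (h ▸ ha')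
    have hba' : b ≠ a' := fun h => disjoint_left.1 hdd hb (h ▸ ha')
    have hsub : ({a, b, a'} : Finset (Finset ℕ)) ⊆ 𝒯.filter (fun t => a ∩ b ⊆ t) := by
      intro x hx
      rw [mem_insert, mem_insert, mem_singleton] at hx
      rcases hx with rfl | rfl | rfl
      · exact mem_filter.2 ⟨(hM e he).2.1 ha, inter_subset_left⟩
      · exact mem_filter.2 ⟨(hM e he).2.1 hb, inter_subset_right⟩
      · exact mem_filter.2 ⟨(hM e' he').2.1 ha', hpp ▸ inter_subset_left⟩
    have hc3 : ({a, b, a'} : Finset (Finset ℕ)).card = 3 := by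
      rw [card_insert_of_notMem (by simp [hab, haa']), card_pair hba']
    have := card_le_card hsub
    have := hocc (a ∩ b) hi
    omega
  calc M.card = (M.image φ).card := (card_image_of_injOn hinj).symm
    _ ≤ big.card := card_le_card (by intro p hp; obtain ⟨e, he, rfl⟩ := mem_image.1 hp; exact hmem e he)

/-- For a family `𝒯` of 3-element trees in which every pair of variables lies in at most
two trees, the minimum circuit size equals `2|𝒯| - ν`, where `ν` is the maximum number of
pairwise disjoint pairs `{T, T'}` of trees with `|T ∩ T'| = 2`.  A circuit solution is
modeled by a choice `f` of a 2-element intermediate subset for each tree; its size is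
`|𝒯|` (output gates) plus the number of distinct intermediate sets used. -/
theorem stmt_14 (𝒯 : Finset (Finset ℕ)) (h3 : ∀ t ∈ 𝒯, t.card = 3)
    (hocc : ∀ p : Finset ℕ, p.card = 2 → (𝒯.filter (fun t => p ⊆ t)).card ≤ 2)
    (ν N : ℕ)
    (hν : IsGreatest {m : ℕ | ∃ M : Finset (Finset (Finset ℕ)), M.card = m ∧
        (∀ e ∈ M, e.card = 2 ∧ e ⊆ 𝒯 ∧ ∃ t ∈ e, ∃ t' ∈ e, t ≠ t' ∧ (t ∩ t').card = 2) ∧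
        (M : Set (Finset (Finset ℕ))).Pairwise Disjoint} ν)
    (hN : IsLeast {s : ℕ | ∃ f : Finset ℕ → Finset ℕ,
        (∀ t ∈ 𝒯, f t ⊆ t ∧ (f t).card = 2) ∧ s = 𝒯.card + (𝒯.image f).card} N) :
    N = 2 * 𝒯.card - ν := by
  classical
  obtain ⟨⟨M, hMcard, hMprop, hMdisj⟩, hνub⟩ := hν
  obtain ⟨⟨f0, hf0, hNeq⟩, hNlb⟩ := hN
  -- lower bound: N + ν ≥ 2 * 𝒯.card
  have hcount0 := st14_count 𝒯 hocc f0 hf0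
  have hb0 : ((𝒯.image f0).filter
      (fun p => 2 ≤ (𝒯.filter (fun t => f0 t = p)).card)).card ≤ ν :=
    st14_big_le 𝒯 h3 hocc ν (fun m hm => hνub hm) f0 hf0
  -- upper bound: from a maximum matching, build a good f
  obtain ⟨f, hf, hbig⟩ := st14_exists_f 𝒯 h3 hocc M hMprop hMdisj
  have hcount := st14_count 𝒯 hocc f hf
  have hNle : N ≤ 𝒯.card + (𝒯.image f).card := hNlb ⟨f, hf, rfl⟩
  rw [hMcard] at hbig
  omega
end
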